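/- arXiv:2007.08947 — 3 statements merged into one kernel-verified Lean document; each statement's English description precedes it below -/
import Mathlib

section
/- Let T > 0 and let σ ∈ L¹((0,T); ℝ) be such that σ is not equal to 0 almost everywhere on (0,T). Then there exist real numbers 0 < r₁ < r₂ such that ∫₀^T e^{−pt} σ(t) dt ≠ 0 for every p ∈ (r₁, r₂). -/
/-!
If `F(p) = ∫₀ᵀ e^{-pt} σ(t) dt` had a zero in every interval `(r₁, r₂) ⊆ (0, ∞)`, then, being
continuous in `p`, it would vanish on `[0, ∞)`, in particular at every `n ∈ ℕ`. So `σ` integrates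
to zero against every polynomial in `e^{-t}`. Since `e^{-t}` is injective, these polynomials are
dense in `C([0, T])` by Stone–Weierstrass, hence `σ` integrates to zero against every continuous
function, and therefore `σ = 0` almost everywhere on `(0, T)`.
-/

open MeasureTheory Set

theorem ContinuousLinearMap.eq_zero_of_map_pow_eq_zero {X : Type*} [TopologicalSpace X]
    [CompactSpace X] (L : C(X, ℝ) →L[ℝ] ℝ) (e : C(X, ℝ)) (he : Function.Injective e)
    (h : ∀ n : ℕ, L (e ^ n) = 0) : L = 0 := by
  have hsep : (Algebra.adjoin ℝ {e}).SeparatesPoints := fun x y hxy =>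
    ⟨e, ⟨e, Algebra.subset_adjoin rfl, rfl⟩, he.ne hxy⟩
  have hvanish : ∀ f ∈ Algebra.adjoin ℝ {e}, L f = 0 := by
    rw [Algebra.adjoin_singleton_eq_range_aeval]
    rintro _ ⟨P, rfl⟩
    simp [Polynomial.aeval_eq_sum_range, h]
  ext f
  have hdense : f ∈ closure (Algebra.adjoin ℝ {e} : Set C(X, ℝ)) := by
    rw [← Subalgebra.topologicalClosure_coe,
      ContinuousMap.subalgebra_topologicalClosure_eq_top_of_separatesPoints _ hsep]
    trivial
  exact closure_minimal hvanish (isClosed_eq L.continuous continuous_const) hdense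

theorem Continuous.eq_of_forall_exists_mem_Ioo_eq {X : Type*} [TopologicalSpace X] [T1Space X]
    {F : ℝ → X} (hF : Continuous F) {x : X}
    (h : ∀ r₁ r₂ : ℝ, 0 < r₁ → r₁ < r₂ → ∃ p ∈ Ioo r₁ r₂, F p = x) {p : ℝ} (hp : 0 ≤ p) :
    F p = x := by
  have hdense : Ioi 0 ⊆ closure (F ⁻¹' {x}) := fun q hq => Metric.mem_closure_iff.2 fun ε hε => by
    obtain ⟨r, ⟨hqr, hrε⟩, hFr⟩ := h q (q + ε) hq (by linarith)
    exact ⟨r, hFr, by rw [Real.dist_eq, abs_sub_comm, abs_of_pos (by linarith)]; linarith⟩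
  show p ∈ F ⁻¹' {x}
  rw [← (isClosed_singleton.preimage hF).closure_eq]
  exact closure_minimal hdense isClosed_closure (by rwa [closure_Ioi])

section IntegralAgainst

variable {a b : ℝ} (hab : a ≤ b) {σ : ℝ → ℝ}

theorem integrableOn_mul_projIcc (hσ : IntegrableOn σ (Ioo a b)) (f : C(Icc a b, ℝ)) :
    IntegrableOn (fun t => f (projIcc a b hab t) * σ t) (Ioo a b) :=
  hσ.continuousOn_mul_of_subset (f.continuous.comp continuous_projIcc).continuousOn
    isCompact_Icc measurableSet_Ioo Ioo_subset_Icc_self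

noncomputable def integralAgainstCLM (hσ : IntegrableOn σ (Ioo a b)) : C(Icc a b, ℝ) →L[ℝ] ℝ :=
  LinearMap.mkContinuous
    { toFun := fun f => ∫ t in Ioo a b, f (projIcc a b hab t) * σ t
      map_add' := fun f g => by
        simp only [ContinuousMap.add_apply, add_mul]
        exact integral_add (integrableOn_mul_projIcc hab hσ f) (integrableOn_mul_projIcc hab hσ g)
      map_smul' := fun c f => by
        simp only [ContinuousMap.smul_apply, smul_eq_mul, mul_assoc, RingHom.id_apply]
        exact integral_const_mul c _ }
    (∫ t in Ioo a b, ‖σ t‖) fun f => calc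
      ‖∫ t in Ioo a b, f (projIcc a b hab t) * σ t‖ ≤ ∫ t in Ioo a b, ‖f‖ * ‖σ t‖ :=
        norm_integral_le_of_norm_le (hσ.norm.const_mul _) <| .of_forall fun t => by
          rw [norm_mul]
          gcongr
          exact f.norm_coe_le_norm _
      _ = (∫ t in Ioo a b, ‖σ t‖) * ‖f‖ := by rw [integral_const_mul, mul_comm]

theorem integralAgainstCLM_apply_of_eq (hσ : IntegrableOn σ (Ioo a b)) (f : C(Icc a b, ℝ))
    {φ : ℝ → ℝ} (hf : ∀ t : Icc a b, f t = φ t) :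
    integralAgainstCLM hab hσ f = ∫ t in Ioo a b, φ t * σ t := by
  refine setIntegral_congr_fun measurableSet_Ioo fun t ht => ?_
  rw [projIcc_of_mem hab (Ioo_subset_Icc_self ht), hf]

theorem ae_eq_zero_of_integralAgainstCLM_eq_zero {hσ : IntegrableOn σ (Ioo a b)}
    (h : integralAgainstCLM hab hσ = 0) : σ =ᵐ[volume.restrict (Ioo a b)] 0 := by
  rw [Filter.EventuallyEq, ae_restrict_iff' measurableSet_Ioo]
  refine isOpen_Ioo.ae_eq_zero_of_integral_contDiff_smul_eq_zero hσ.locallyIntegrableOn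
    fun g _ _ hsupp => ?_
  have hg_out : ∀ t ∉ Ioo a b, g t * σ t = 0 := fun t ht => by
    rw [image_eq_zero_of_notMem_tsupport fun h => ht (hsupp h), zero_mul]
  simp only [smul_eq_mul]
  rw [← setIntegral_eq_integral_of_forall_compl_eq_zero hg_out,
    ← integralAgainstCLM_apply_of_eq hab hσ ⟨fun t => g t, by fun_prop⟩ fun _ => rfl, h]
  rfl

end IntegralAgainst

/-- The finite Laplace transform of a nonzero integrable function on `(0,T)` is
nonvanishing on some nonempty open interval of positive reals. -/
theorem laplace_nonvanishing_on_interval (T : ℝ) (hT : 0 < T) (σ : ℝ → ℝ)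
    (hσ : IntegrableOn σ (Set.Ioo 0 T))
    (hne : ¬ σ =ᵐ[volume.restrict (Set.Ioo 0 T)] 0) :
    ∃ r₁ r₂ : ℝ, 0 < r₁ ∧ r₁ < r₂ ∧
      ∀ p ∈ Set.Ioo r₁ r₂, (∫ t in Set.Ioo 0 T, Real.exp (-p * t) * σ t) ≠ 0 := by
  by_contra hcon
  push Not at hcon
  let L := integralAgainstCLM hT.le hσ
  let E : C(ℝ, C(Icc 0 T, ℝ)) :=
    ContinuousMap.curry ⟨fun q : ℝ × Icc 0 T => Real.exp (-q.1 * q.2), by fun_prop⟩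
  have hLE : ∀ p, L (E p) = ∫ t in Ioo 0 T, Real.exp (-p * t) * σ t := fun p =>
    integralAgainstCLM_apply_of_eq hT.le hσ _ fun _ => rfl
  have hE_pow : ∀ n : ℕ, E 1 ^ n = E n := fun n => by
    ext t
    simp [E, ← Real.exp_nat_mul]
  have hE_inj : Function.Injective (E 1) := fun s t hst =>
    Subtype.ext (by simpa [E] using hst)
  have hmoments : ∀ n : ℕ, L (E 1 ^ n) = 0 := fun n => by
    rw [hE_pow]
    exact (L.continuous.comp E.continuous).eq_of_forall_exists_mem_Ioo_eq
      (by simpa only [Function.comp_apply, hLE] using hcon) n.cast_nonneg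
  exact hne (ae_eq_zero_of_integralAgainstCLM_eq_zero hT.le
    (L.eq_zero_of_map_pow_eq_zero (E 1) hE_inj hmoments))
end

section
/- Let X be a Banach space, p₀ ∈ ℝ, and let w : (0,∞) → X be strongly measurable with ∫₀^∞ e^{−p₀ t} ‖w(t)‖ dt < ∞. If ∫₀^∞ e^{−pt} w(t) dt = 0 (as a Bochner integral in X) for every real p > p₀, then w(t) = 0 for almost every t > 0. -/
/-!
For `H t = e^{-(p₀+1)t} w t`, the map `g ↦ ∫_{t>0} g(e^{-t}) H t dt` is a bounded linear map
`C([0,1]) → X`. Taking `p = p₀ + 1 + n` in the hypothesis shows that it kills every monomial `u^n`,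
so by Weierstrass it vanishes identically. A smooth `φ` with compact support in `(0,∞)` is of the
form `g(e^{-t})` with `g(u) = φ(-log u)` continuous on `[0,1]`, so `∫ φ H = 0` for all such `φ`,
and `H`, hence `w`, vanishes almost everywhere on `(0,∞)`.
-/

open MeasureTheory Set Filter Real

lemma exp_neg_mem_Icc {t : ℝ} (ht : 0 ≤ t) : exp (-t) ∈ Icc (0:ℝ) 1 :=
  ⟨(exp_pos _).le, exp_le_one_iff.2 (neg_nonpos.2 ht)⟩

lemma continuous_comp_neg_log {β : Type*} [TopologicalSpace β] [Zero β] {g : ℝ → β}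
    (hg : Continuous g) (hgc : HasCompactSupport g) (hg0 : g 0 = 0) :
    Continuous fun u => g (-log u) := by
  refine continuous_iff_continuousAt.2 fun u => ?_
  rcases eq_or_ne u 0 with rfl | hu
  · rw [← continuousWithinAt_compl_self, ContinuousWithinAt, log_zero, neg_zero, hg0]
    exact hgc.is_zero_at_infty.comp <|
      (tendsto_neg_atBot_atTop.comp tendsto_log_nhdsNE_zero).mono_right atTop_le_cocompact
  · exact hg.continuousAt.comp (continuousAt_log hu).neg

section

variable {E : Type*} [NormedAddCommGroup E] [NormedSpace ℝ E]

lemma integrableOn_IccExtend_smul {H : ℝ → E} (hH : IntegrableOn H (Ioi 0))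
    (g : C(Icc (0:ℝ) 1, ℝ)) :
    IntegrableOn (fun t => IccExtend zero_le_one g (exp (-t)) • H t) (Ioi 0) :=
  hH.bdd_smul ‖g‖ ((g.IccExtend zero_le_one).continuous.comp
    (continuous_exp.comp continuous_neg)).aestronglyMeasurable
    (Eventually.of_forall fun _ => g.norm_coe_le_norm _)

noncomputable def expPairing {H : ℝ → E} (hH : IntegrableOn H (Ioi 0)) :
    C(Icc (0:ℝ) 1, ℝ) →L[ℝ] E :=
  LinearMap.mkContinuous
    { toFun := fun g => ∫ t in Ioi 0, IccExtend zero_le_one g (exp (-t)) • H t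
      map_add' := fun g₁ g₂ => by
        simp only [IccExtend_apply, ContinuousMap.add_apply, add_smul]
        exact integral_add (integrableOn_IccExtend_smul hH g₁) (integrableOn_IccExtend_smul hH g₂)
      map_smul' := fun c g => by
        simp only [IccExtend_apply, ContinuousMap.smul_apply, smul_eq_mul, mul_smul,
          RingHom.id_apply]
        exact integral_smul c _ }
    (∫ t in Ioi 0, ‖H t‖) fun g => by
      calc ‖∫ t in Ioi 0, IccExtend zero_le_one g (exp (-t)) • H t‖
          ≤ ∫ t in Ioi 0, ‖g‖ * ‖H t‖ :=
            norm_integral_le_of_norm_le (hH.norm.const_mul _) <| Eventually.of_forall fun t => by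
              rw [norm_smul]; gcongr; exact g.norm_coe_le_norm _
        _ = (∫ t in Ioi 0, ‖H t‖) * ‖g‖ := by rw [integral_const_mul, mul_comm]

lemma expPairing_apply {H : ℝ → E} (hH : IntegrableOn H (Ioi 0)) (g : C(Icc (0:ℝ) 1, ℝ)) :
    expPairing hH g = ∫ t in Ioi 0, IccExtend zero_le_one g (exp (-t)) • H t := rfl

lemma expPairing_eq_zero {H : ℝ → E} (hH : IntegrableOn H (Ioi 0))
    (hm : ∀ n : ℕ, ∫ t in Ioi 0, exp (-t) ^ n • H t = 0) : expPairing hH = 0 := by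
  have hpoly : EqOn (expPairing hH) 0 (polynomialFunctions (Icc (0:ℝ) 1)) := by
    rw [polynomialFunctions_coe]
    rintro _ ⟨q, rfl⟩
    induction q using Polynomial.induction_on' with
    | add p q hp hq => simp only [map_add, hp, hq, Pi.zero_apply, add_zero]
    | monomial n a =>
      calc expPairing hH _ = a • ∫ t in Ioi 0, exp (-t) ^ n • H t := by
            rw [expPairing_apply, ← integral_smul]
            refine setIntegral_congr_fun measurableSet_Ioi fun t ht => ?_
            simp [IccExtend_of_mem _ _ (exp_neg_mem_Icc ht.le), smul_smul]
        _ = 0 := by rw [hm n, smul_zero]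
  have hdense : Dense (polynomialFunctions (Icc (0:ℝ) 1) : Set C(Icc (0:ℝ) 1, ℝ)) := by
    rw [dense_iff_closure_eq, ← Subalgebra.topologicalClosure_coe,
      polynomialFunctions_closure_eq_top, Algebra.coe_top]
  exact DFunLike.coe_injective <| Continuous.ext_on hdense (expPairing hH).continuous
    (0 : C(Icc (0:ℝ) 1, ℝ) →L[ℝ] E).continuous hpoly

theorem ae_eq_zero_of_integral_exp_pow_smul_eq_zero [CompleteSpace E] {H : ℝ → E}
    (hH : IntegrableOn H (Ioi 0)) (hm : ∀ n : ℕ, ∫ t in Ioi 0, exp (-t) ^ n • H t = 0) :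
    ∀ᵐ t ∂volume.restrict (Ioi 0), H t = 0 := by
  rw [ae_restrict_iff' measurableSet_Ioi]
  refine isOpen_Ioi.ae_eq_zero_of_integral_contDiff_smul_eq_zero hH.locallyIntegrableOn
    fun g hg hgc hgU => ?_
  have hg_off : ∀ t ∉ Ioi (0:ℝ), g t = 0 := fun t ht =>
    image_eq_zero_of_notMem_tsupport fun h => ht (hgU h)
  have hG := continuous_comp_neg_log hg.continuous hgc (hg_off 0 (notMem_Ioi.2 le_rfl))
  have hpair := congr($(expPairing_eq_zero hH hm) ((⟨_, hG⟩ : C(ℝ, ℝ)).restrict (Icc 0 1)))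
  rw [expPairing_apply, zero_apply] at hpair
  rw [← setIntegral_eq_integral_of_forall_compl_eq_zero fun t ht => by rw [hg_off t ht, zero_smul],
    ← hpair]
  refine setIntegral_congr_fun measurableSet_Ioi fun t ht => ?_
  simp [IccExtend_of_mem _ _ (exp_neg_mem_Icc ht.le)]

lemma integrableOn_exp_smul_of_le {w : ℝ → E} {p₀ p : ℝ}
    (hmeas : AEStronglyMeasurable w (volume.restrict (Ioi 0)))
    (hint : IntegrableOn (fun t => exp (-p₀ * t) * ‖w t‖) (Ioi 0)) (hp : p₀ ≤ p) :
    IntegrableOn (fun t => exp (-p * t) • w t) (Ioi 0) := by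
  refine hint.mono'
    ((continuous_exp.comp (continuous_const_mul _)).aestronglyMeasurable.smul hmeas) ?_
  filter_upwards [self_mem_ae_restrict measurableSet_Ioi] with t ht
  rw [norm_smul, norm_of_nonneg (exp_pos _).le]
  gcongr
  exact ht.le

end

/-- Uniqueness of the vector-valued Laplace transform: if `w : (0,∞) → X` is
strongly measurable with `∫₀^∞ e^{-p₀ t} ‖w t‖ dt < ∞` and its Laplace transform
vanishes at every real `p > p₀`, then `w = 0` almost everywhere on `(0,∞)`. -/
theorem laplace_transform_uniqueness {X : Type*} [NormedAddCommGroup X]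
    [NormedSpace ℝ X] [CompleteSpace X] (p₀ : ℝ) (w : ℝ → X)
    (hmeas : AEStronglyMeasurable w (volume.restrict (Set.Ioi 0)))
    (hint : IntegrableOn (fun t => Real.exp (-p₀ * t) * ‖w t‖) (Set.Ioi 0))
    (hzero : ∀ p > p₀, (∫ t in Set.Ioi (0:ℝ), Real.exp (-p * t) • w t) = 0) :
    ∀ᵐ t ∂(volume.restrict (Set.Ioi (0:ℝ))), w t = 0 := by
  have hH := integrableOn_exp_smul_of_le hmeas hint (le_add_of_nonneg_right zero_le_one)
  have hm : ∀ n : ℕ, ∫ t in Ioi 0, exp (-t) ^ n • exp (-(p₀ + 1) * t) • w t = 0 := fun n => by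
    rw [← hzero (p₀ + 1 + n) ((lt_add_one p₀).trans_le (le_add_of_nonneg_right n.cast_nonneg))]
    congr with t
    rw [smul_smul, ← exp_nat_mul, ← exp_add]
    ring_nf
  filter_upwards [ae_eq_zero_of_integral_exp_pow_smul_eq_zero hH hm] with t ht
  exact (smul_eq_zero.1 ht).resolve_left (exp_pos _).ne'
end

section
/- Let X and Y be complex Banach spaces, θ ∈ (0, π/2), β ∈ (0,1], r ∈ ℝ, C > 0, b > 0, let S : D_{0,θ} → L(X,Y) be analytic with ‖S(w)‖_{L(X,Y)} ≤ C max(|w|^{β−1}, 1) e^{r Re w} for all w ∈ D_{0,θ}, and let F ∈ L¹((0,b); X) be Bochner integrable. Then for every z ∈ D_{b,θ} the Bochner integral G(z) := ∫₀^b S(z − s) F(s) ds exists in Y, and the map G : D_{b,θ} → Y is analytic. -/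
open MeasureTheory

/-- The open sector `D_{s,θ} = {s + r e^{iβ} : r > 0, β ∈ (-θ,θ)} ⊆ ℂ`. -/
def sector (s θ : ℝ) : Set ℂ :=
  {z : ℂ | ∃ r : ℝ, 0 < r ∧ ∃ β : ℝ, β ∈ Set.Ioo (-θ) θ ∧
    z = (s : ℂ) + (r : ℂ) * Complex.exp ((β : ℂ) * Complex.I)}

/-! For `z` in the open sector `D_{b,θ}` and `s ∈ [0,b]` the point `z - s` lies in `D_{0,θ}`;
as `z` ranges over a closed ball in `D_{b,θ}`, these points form a compact subset of `D_{0,θ}`,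
on which `S` and `S'` are bounded. So `S (z - s) (F s)` and its `z`-derivative are dominated by a
multiple of `‖F s‖`, which gives integrability and, by differentiation under the integral sign,
complex differentiability of `G`; on an open set this is analyticity. -/

open Set Complex

theorem Complex.arg_eq_arctan_of_re_pos {w : ℂ} (hw : 0 < w.re) :
    arg w = Real.arctan (w.im / w.re) := by
  obtain ⟨h₁, h₂⟩ := abs_lt.1 (abs_arg_lt_pi_div_two_iff.2 (Or.inl hw))
  rw [← tan_arg, Real.arctan_tan h₁ h₂]

theorem Complex.abs_arg_lt_iff_of_re_pos {w : ℂ} (hw : 0 < w.re) {θ : ℝ}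
    (hθ : θ ∈ Ioo (-(Real.pi / 2)) (Real.pi / 2)) :
    |arg w| < θ ↔ |w.im| < w.re * Real.tan θ := by
  conv_lhs => rw [arg_eq_arctan_of_re_pos hw, ← Real.arctan_tan hθ.1 hθ.2]
  rw [abs_lt, ← Real.arctan_neg, Real.arctan_lt_arctan_iff, Real.arctan_lt_arctan_iff, ← abs_lt,
    abs_div, abs_of_pos hw, div_lt_iff₀ hw, mul_comm]

theorem mem_sector_iff_sub_mem_sector_zero {s θ : ℝ} {z : ℂ} :
    z ∈ sector s θ ↔ z - s ∈ sector 0 θ := by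
  simp only [sector, mem_ofPred_eq, ofReal_zero, zero_add, sub_eq_iff_eq_add']

theorem mem_sector_zero_iff_arg {θ : ℝ} (hθ : θ ≤ Real.pi) {w : ℂ} :
    w ∈ sector 0 θ ↔ w ≠ 0 ∧ |arg w| < θ := by
  constructor
  · rintro ⟨r, hr, β, hβ, rfl⟩
    rw [ofReal_zero, zero_add, exp_mul_I, arg_mul_cos_add_sin_mul_I hr
      ⟨by linarith [hβ.1], by linarith [hβ.2]⟩]
    exact ⟨by simp [hr.ne', ← exp_mul_I, exp_ne_zero], abs_lt.2 hβ⟩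
  · rintro ⟨hw, hθw⟩
    exact ⟨‖w‖, norm_pos_iff.2 hw, arg w, abs_lt.1 hθw, by
      rw [ofReal_zero, zero_add, norm_mul_exp_arg_mul_I]⟩

theorem mem_sector_zero_iff_abs_im_lt {θ : ℝ} (hθ : θ ∈ Ioo 0 (Real.pi / 2)) {w : ℂ} :
    w ∈ sector 0 θ ↔ |w.im| < w.re * Real.tan θ := by
  have htan : 0 < Real.tan θ := Real.tan_pos_of_pos_of_lt_pi_div_two hθ.1 hθ.2
  have hθ' : θ ∈ Ioo (-(Real.pi / 2)) (Real.pi / 2) := ⟨by linarith [hθ.1, Real.pi_pos], hθ.2⟩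
  rw [mem_sector_zero_iff_arg (by linarith [hθ.2, Real.pi_pos])]
  constructor
  · rintro ⟨hw, hθw⟩
    have hre : 0 < w.re :=
      (abs_arg_lt_pi_div_two_iff.1 (hθw.trans hθ.2)).resolve_right hw
    exact (abs_arg_lt_iff_of_re_pos hre hθ').1 hθw
  · intro h
    have hre : 0 < w.re := pos_of_mul_pos_left ((abs_nonneg _).trans_lt h) htan.le
    exact ⟨fun hw ↦ by simp [hw] at hre, (abs_arg_lt_iff_of_re_pos hre hθ').2 h⟩

theorem isOpen_sector {s θ : ℝ} (hθ : θ ∈ Ioo 0 (Real.pi / 2)) : IsOpen (sector s θ) := by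
  have : sector s θ = (· - (s : ℂ)) ⁻¹' {w | |w.im| < w.re * Real.tan θ} := by
    ext z
    exact mem_sector_iff_sub_mem_sector_zero.trans (mem_sector_zero_iff_abs_im_lt hθ)
  rw [this]
  exact (isOpen_lt (by fun_prop) (by fun_prop)).preimage (by fun_prop)

theorem sub_ofReal_mem_sector_zero {b θ : ℝ} (hθ : θ ∈ Ioo 0 (Real.pi / 2)) {z : ℂ}
    (hz : z ∈ sector b θ) {s : ℝ} (hs : s ≤ b) : z - s ∈ sector 0 θ := by
  rw [mem_sector_iff_sub_mem_sector_zero, mem_sector_zero_iff_abs_im_lt hθ] at hz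
  rw [mem_sector_zero_iff_abs_im_lt hθ]
  have htan : 0 < Real.tan θ := Real.tan_pos_of_pos_of_lt_pi_div_two hθ.1 hθ.2
  simp only [sub_re, sub_im, ofReal_re, ofReal_im, sub_zero] at hz ⊢
  nlinarith

theorem MeasureTheory.IntegrableOn.continuousOn_clm_apply_of_subset {𝕜 X Y : Type*}
    [NontriviallyNormedField 𝕜] [NormedAddCommGroup X] [NormedSpace 𝕜 X]
    [NormedAddCommGroup Y] [NormedSpace 𝕜 Y] {μ : Measure ℝ} {T : ℝ → X →L[𝕜] Y} {F : ℝ → X}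
    {A K : Set ℝ} (hT : ContinuousOn T K) (hF : IntegrableOn F A μ) (hK : IsCompact K)
    (hA : MeasurableSet A) (hAK : A ⊆ K) :
    IntegrableOn (fun s ↦ T s (F s)) A μ := by
  obtain ⟨M, hM⟩ := hK.exists_bound_of_continuousOn hT
  have hTm : AEStronglyMeasurable T (μ.restrict A) :=
    (hT.mono hAK).aestronglyMeasurable_of_isSeparable hA (.of_separableSpace A)
  refine (hF.norm.const_mul M).mono'
    ((ContinuousLinearMap.id 𝕜 _).aestronglyMeasurable_comp₂ hTm hF.1) ?_
  filter_upwards [ae_restrict_mem hA] with s hs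
  exact (T s).le_of_opNorm_le (hM s (hAK hs)) (F s)

section TranslationKernel

variable {X Y : Type*} [NormedAddCommGroup X] [NormedSpace ℂ X] [NormedAddCommGroup Y]
  [NormedSpace ℂ Y] {S : ℂ → X →L[ℂ] Y} {U V : Set ℂ} {F : ℝ → X} {a b : ℝ}

theorem integrableOn_clm_apply_sub (hS : ContinuousOn S V) {z : ℂ}
    (hz : ∀ s ∈ Icc a b, z - s ∈ V) (hF : IntegrableOn F (Ioo a b)) :
    IntegrableOn (fun s : ℝ ↦ S (z - s) (F s)) (Ioo a b) :=
  hF.continuousOn_clm_apply_of_subset (hS.comp (by fun_prop) hz) isCompact_Icc measurableSet_Ioo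
    Ioo_subset_Icc_self

theorem IsCompact.exists_bound_of_continuousOn_sub_Icc {K : Set ℂ} (hK : IsCompact K)
    (hS : ContinuousOn S V) (hKV : ∀ z ∈ K, ∀ s ∈ Icc a b, z - s ∈ V) :
    ∃ M, ∀ z ∈ K, ∀ s ∈ Icc a b, ‖S (z - s)‖ ≤ M := by
  have hKab : IsCompact ((fun p : ℂ × ℝ ↦ p.1 - p.2) '' K ×ˢ Icc a b) :=
    (hK.prod isCompact_Icc).image (by fun_prop)
  obtain ⟨M, hM⟩ := hKab.exists_bound_of_continuousOn
    (hS.mono (by rintro _ ⟨⟨z, s⟩, ⟨hz, hs⟩, rfl⟩; exact hKV z hz s hs))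
  exact ⟨M, fun z hz s hs ↦ hM _ ⟨(z, s), ⟨hz, hs⟩, rfl⟩⟩

theorem analyticOnNhd_integral_clm_apply_sub [CompleteSpace Y] (hS : AnalyticOnNhd ℂ S V)
    (hU : IsOpen U) (hUV : ∀ z ∈ U, ∀ s ∈ Icc a b, z - s ∈ V) (hF : IntegrableOn F (Ioo a b)) :
    AnalyticOnNhd ℂ (fun z ↦ ∫ s in Ioo a b, S (z - s) (F s)) U := by
  refine DifferentiableOn.analyticOnNhd (fun z₀ hz₀ ↦ ?_) hU
  obtain ⟨ε, hε, hball⟩ := Metric.nhds_basis_closedBall.mem_iff.1 (hU.mem_nhds hz₀)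
  obtain ⟨M, hM⟩ := (isCompact_closedBall z₀ ε).exists_bound_of_continuousOn_sub_Icc
    hS.deriv.continuousOn fun z hz ↦ hUV z (hball hz)
  have hderiv : ∀ z ∈ U, ∀ s ∈ Icc a b,
      HasDerivAt (fun z ↦ S (z - s) (F s)) (deriv S (z - s) (F s)) z := fun z hz s hs ↦ by
    have hSz := ((hS _ (hUV z hz s hs)).differentiableAt.hasDerivAt).comp_sub_const z (s : ℂ)
    simpa using hSz.clm_apply (hasDerivAt_const z (F s))
  refine (hasDerivAt_integral_of_dominated_loc_of_deriv_le (μ := volume.restrict (Ioo a b))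
    (F := fun z s ↦ S (z - s) (F s)) (F' := fun z s ↦ deriv S (z - s) (F s))
    (Metric.ball_mem_nhds z₀ hε) ?_
    (integrableOn_clm_apply_sub hS.continuousOn (hUV z₀ hz₀) hF)
    (integrableOn_clm_apply_sub hS.deriv.continuousOn (hUV z₀ hz₀) hF).1 ?_
    (hF.norm.const_mul M) ?_).2.differentiableAt.differentiableWithinAt
  · filter_upwards [hU.mem_nhds hz₀] with z hz
    exact (integrableOn_clm_apply_sub hS.continuousOn (hUV z hz) hF).1
  · filter_upwards [ae_restrict_mem measurableSet_Ioo] with s hs z hz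
    exact (deriv S _).le_of_opNorm_le
      (hM z (Metric.ball_subset_closedBall hz) s (Ioo_subset_Icc_self hs)) (F s)
  · filter_upwards [ae_restrict_mem measurableSet_Ioo] with s hs z hz
    exact hderiv z (hball (Metric.ball_subset_closedBall hz)) s (Ioo_subset_Icc_self hs)

end TranslationKernel

theorem duhamel_term_analytic_extension_general
    {X Y : Type*} [NormedAddCommGroup X] [NormedSpace ℂ X]
    [NormedAddCommGroup Y] [NormedSpace ℂ Y] [CompleteSpace Y]
    (θ b : ℝ) (hθ : θ ∈ Set.Ioo 0 (Real.pi / 2))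
    (S : ℂ → X →L[ℂ] Y) (hS : AnalyticOnNhd ℂ S (sector 0 θ))
    (F : ℝ → X) (hF : IntegrableOn F (Set.Ioo 0 b)) :
    (∀ z ∈ sector b θ,
      IntegrableOn (fun s : ℝ => S (z - (s : ℂ)) (F s)) (Set.Ioo 0 b)) ∧
    AnalyticOnNhd ℂ (fun z : ℂ => ∫ s in Set.Ioo (0:ℝ) b, S (z - (s : ℂ)) (F s))
      (sector b θ) := by
  have hsub : ∀ z ∈ sector b θ, ∀ s ∈ Icc 0 b, z - s ∈ sector 0 θ :=
    fun z hz s hs ↦ sub_ofReal_mem_sector_zero hθ hz hs.2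
  exact ⟨fun z hz ↦ integrableOn_clm_apply_sub hS.continuousOn (hsub z hz) hF,
    analyticOnNhd_integral_clm_apply_sub hS (isOpen_sector hθ) hsub hF⟩

/-- If `S` is an analytic operator family on the sector `D_{0,θ}`, `θ ∈ (0,π/2)`,
satisfying `‖S(w)‖ ≤ C max(|w|^{β-1},1) e^{r Re w}`, and `F ∈ L¹((0,b); X)`, then
for every `z ∈ D_{b,θ}` the Duhamel-type Bochner integral
`G(z) = ∫₀^b S(z-s) F(s) ds` exists and `G` is analytic on `D_{b,θ}`. -/
theorem duhamel_term_analytic_extension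
    {X Y : Type*} [NormedAddCommGroup X] [NormedSpace ℂ X]
    [NormedAddCommGroup Y] [NormedSpace ℂ Y] [CompleteSpace Y]
    (θ β r C b : ℝ) (hθ : θ ∈ Set.Ioo 0 (Real.pi / 2)) (hβ : β ∈ Set.Ioc (0:ℝ) 1)
    (hC : 0 < C) (hb : 0 < b)
    (S : ℂ → X →L[ℂ] Y) (hS : AnalyticOnNhd ℂ S (sector 0 θ))
    (hSb : ∀ w ∈ sector 0 θ,
      ‖S w‖ ≤ C * max (‖w‖ ^ (β - 1)) 1 * Real.exp (r * w.re))
    (F : ℝ → X) (hF : IntegrableOn F (Set.Ioo 0 b)) :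
    (∀ z ∈ sector b θ,
      IntegrableOn (fun s : ℝ => S (z - (s : ℂ)) (F s)) (Set.Ioo 0 b)) ∧
    AnalyticOnNhd ℂ (fun z : ℂ => ∫ s in Set.Ioo (0:ℝ) b, S (z - (s : ℂ)) (F s))
      (sector b θ) :=
  duhamel_term_analytic_extension_general θ b hθ S hS F hF
end
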